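/- Let R be an algebraic curvature tensor on ℝⁿ (n ≥ 4). The following are equivalent: (i) for all orthonormal four-frames {e₁,e₂,e₃,e₄} and all λ, μ ∈ [0,1], R(e₁,e₃,e₁,e₃) + λ²R(e₁,e₄,e₁,e₄) + μ²R(e₂,e₃,e₂,e₃) + λ²μ²R(e₂,e₄,e₂,e₄) − 2λμR(e₁,e₂,e₃,e₄) ≥ 0; (ii) R(ζ,η,ζ̄,η̄) ≥ 0 for all vectors ζ, η ∈ ℂⁿ. -/

import Mathlib

noncomputable section
open scoped BigOperators ComplexOrder

def dotp {n : ℕ} (X Y : Fin n → ℝ) : ℝ := ∑ i, X i * Y i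

def ON4 {n : ℕ} (e₁ e₂ e₃ e₄ : Fin n → ℝ) : Prop :=
  dotp e₁ e₁ = 1 ∧ dotp e₂ e₂ = 1 ∧ dotp e₃ e₃ = 1 ∧ dotp e₄ e₄ = 1 ∧
  dotp e₁ e₂ = 0 ∧ dotp e₁ e₃ = 0 ∧ dotp e₁ e₄ = 0 ∧
  dotp e₂ e₃ = 0 ∧ dotp e₂ e₄ = 0 ∧ dotp e₃ e₄ = 0

/-- Complex bilinear extension of the standard inner product. -/
def gc {n : ℕ} (ζ η : Fin n → ℂ) : ℂ := ∑ i, ζ i * η i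

/-- Componentwise complex conjugation. -/
def conjv {n : ℕ} (ζ : Fin n → ℂ) : Fin n → ℂ := fun i => (starRingEnd ℂ) (ζ i)

/-- Inclusion of real vectors into the complexification. -/
def ιC {n : ℕ} (X : Fin n → ℝ) : Fin n → ℂ := fun i => (X i : ℂ)

/-!
For `ζ = a + ib` and `η = c + id` the symmetries of `R` and the first Bianchi identity give
`R(ζ, η, ζ̄, η̄) = R(a,c,a,c) + R(a,d,a,d) + R(b,c,b,c) + R(b,d,b,d) - 2 R(a,b,c,d)`,
so (ii) ⇒ (i) is the case `ζ = e₁ + iμ e₂`, `η = e₃ + iλ e₄`.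

Conversely, `R(ζ, η, ζ̄, η̄)` only changes by the factor `|det|²` under a change of basis of
`span {ζ, η}`. A Takagi factorization of the complex bilinear form `g` on a unitary basis of
that plane yields a hermitian-orthogonal basis `V₁ = a + ib`, `V₂ = c + id` with
`g(V₁, V₂) = 0` and `g(V₁, V₁), g(V₂, V₂) ≥ 0`; that is, `a, b, c, d` are mutually orthogonal
with `|b| ≤ |a|` and `|d| ≤ |c|`. Completing their normalizations to an orthonormal four-frame
(here `n ≥ 4` is used), the expression above becomes `|a|²|c|²` times the quantity in (i) with
`λ = |d|/|c|` and `μ = |b|/|a|`.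
-/

open Matrix

namespace MultilinearMap

variable {K M N : Type*} [CommRing K] [AddCommGroup M] [Module K M] [AddCommGroup N] [Module K N]

/-- Currying makes every slot the argument of a (bundled) linear map, so that `simp` with
`map_add` and `map_smul` expands `f` in all four slots at once. -/
theorem apply_vec4_eq_curryLeft (f : MultilinearMap K (fun _ : Fin 4 => M) N) (x y z w : M) :
    f ![x, y, z, w] = multilinearCurryLeftEquiv K _ N (multilinearCurryLeftEquiv K _ N
      (multilinearCurryLeftEquiv K _ N (multilinearCurryLeftEquiv K _ N f x) y) z) w ![] := by
  simp only [multilinearCurryLeftEquiv_apply, curryLeft_apply]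
  rfl

theorem map_lincomb_left (f : MultilinearMap K (fun _ : Fin 4 => M) N)
    (hf : ∀ x z w, f ![x, x, z, w] = 0) (a b c d : K) (x y z w : M) :
    f ![a • x + b • y, c • x + d • y, z, w] = (a * d - b * c) • f ![x, y, z, w] := by
  have hxy := hf (x + y) z w
  simp only [apply_vec4_eq_curryLeft, map_add, map_smul, LinearMap.add_apply, LinearMap.smul_apply,
    _root_.add_apply, _root_.smul_apply] at hxy ⊢
  simp only [← apply_vec4_eq_curryLeft, hf, add_zero, zero_add, smul_zero] at hxy ⊢
  rw [eq_neg_of_add_eq_zero_left hxy]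
  module

theorem map_lincomb_right (f : MultilinearMap K (fun _ : Fin 4 => M) N)
    (hf : ∀ x y z, f ![x, y, z, z] = 0) (a b c d : K) (x y z w : M) :
    f ![x, y, a • z + b • w, c • z + d • w] = (a * d - b * c) • f ![x, y, z, w] := by
  have hzw := hf x y (z + w)
  simp only [apply_vec4_eq_curryLeft, map_add, map_smul, LinearMap.add_apply, LinearMap.smul_apply,
    _root_.add_apply, _root_.smul_apply] at hzw ⊢
  simp only [← apply_vec4_eq_curryLeft, hf, add_zero, zero_add, smul_zero] at hzw ⊢
  rw [eq_neg_of_add_eq_zero_left hzw]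
  module

end MultilinearMap

theorem MultilinearMap.map_eq_zero_of_not_linearIndependent {K M : Type*} [Field K] [AddCommGroup M]
    [Module K M] (f : MultilinearMap K (fun _ : Fin 4 => M) K) (hf : ∀ x z w, f ![x, x, z, w] = 0)
    {x y : M} (h : ¬LinearIndependent K ![x, y]) (z w : M) : f ![x, y, z, w] = 0 := by
  rw [LinearIndependent.pair_iff] at h
  push Not at h
  obtain ⟨s, t, hst, hne⟩ := h
  have hs : s • f ![x, y, z, w] = 0 := by
    have := f.map_lincomb_left hf s t 0 1 x y z w
    rwa [hst, zero_smul, one_smul, zero_add, mul_one, mul_zero, sub_zero,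
      f.map_coord_zero 0 rfl, eq_comm] at this
  have ht : t • f ![x, y, z, w] = 0 := by
    have := f.map_lincomb_left hf 1 0 s t x y z w
    rwa [hst, zero_smul, one_smul, add_zero, one_mul, zero_mul, sub_zero,
      f.map_coord_zero 1 rfl, eq_comm] at this
  by_cases hs0 : s = 0
  · exact (smul_eq_zero.1 ht).resolve_left (hne hs0)
  · exact (smul_eq_zero.1 hs).resolve_left hs0

theorem vec4_comp_swap_zero_one {α : Type*} (x y z w : α) :
    (fun i => ![x, y, z, w] (Equiv.swap 0 1 i)) = ![y, x, z, w] := by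
  ext i; fin_cases i <;> rfl

theorem vec4_comp_swap_two_three {α : Type*} (x y z w : α) :
    (fun i => ![x, y, z, w] (Equiv.swap 2 3 i)) = ![x, y, w, z] := by
  ext i; fin_cases i <;> rfl

theorem nonneg_of_nonneg_on_unit_square {A B C D E : ℝ}
    (h : ∀ lam mu : ℝ, lam ∈ Set.Icc (0 : ℝ) 1 → mu ∈ Set.Icc (0 : ℝ) 1 →
      0 ≤ A + lam ^ 2 * B + mu ^ 2 * C + lam ^ 2 * mu ^ 2 * D - 2 * lam * mu * E)
    {α β γ δ : ℝ} (hβ : 0 ≤ β) (hβα : β ≤ α) (hδ : 0 ≤ δ) (hδγ : δ ≤ γ) :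
    0 ≤ α ^ 2 * γ ^ 2 * A + α ^ 2 * δ ^ 2 * B + β ^ 2 * γ ^ 2 * C + β ^ 2 * δ ^ 2 * D
      - 2 * α * β * γ * δ * E := by
  rcases (hβ.trans hβα).eq_or_lt with rfl | hα
  · obtain rfl : β = 0 := le_antisymm hβα hβ
    simp
  rcases (hδ.trans hδγ).eq_or_lt with rfl | hγ
  · obtain rfl : δ = 0 := le_antisymm hδγ hδ
    simp
  have key := h (δ / γ) (β / α) ⟨by positivity, (div_le_one hγ).2 hδγ⟩
    ⟨by positivity, (div_le_one hα).2 hβα⟩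
  calc 0 ≤ α ^ 2 * γ ^ 2 * (A + (δ / γ) ^ 2 * B + (β / α) ^ 2 * C
        + (δ / γ) ^ 2 * (β / α) ^ 2 * D - 2 * (δ / γ) * (β / α) * E) := by positivity
    _ = _ := by field_simp

section RealFrames

variable {n : ℕ}

theorem exists_ne_zero_orthogonal {k : ℕ} (hk : k < n) (v : Fin k → Fin n → ℝ) :
    ∃ x : Fin n → ℝ, x ≠ 0 ∧ ∀ i, x ⬝ᵥ v i = 0 := by
  have hker : LinearMap.ker (Matrix.of v).mulVecLin ≠ ⊥ :=
    LinearMap.ker_ne_bot_of_finrank_lt (by simpa using hk)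
  obtain ⟨x, hx, hx0⟩ := Submodule.exists_mem_ne_zero_of_ne_bot hker
  exact ⟨x, hx0, fun i => by rw [dotProduct_comm]; exact congrFun (LinearMap.mem_ker.1 hx) i⟩

theorem dotProduct_self_pos {x : Fin n → ℝ} (hx : x ≠ 0) : 0 < x ⬝ᵥ x :=
  lt_of_le_of_ne (Finset.sum_nonneg fun i _ => mul_self_nonneg (x i))
    (Ne.symm (dotProduct_self_eq_zero.not.2 hx))

theorem dotProduct_inv_sqrt_smul_self {x : Fin n → ℝ} (hx : x ≠ 0) :
    ((√(x ⬝ᵥ x))⁻¹ • x) ⬝ᵥ ((√(x ⬝ᵥ x))⁻¹ • x) = 1 := by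
  have hpos := dotProduct_self_pos hx
  rw [smul_dotProduct, dotProduct_smul, smul_eq_mul, smul_eq_mul, ← mul_assoc, ← mul_inv,
    Real.mul_self_sqrt hpos.le, inv_mul_cancel₀ hpos.ne']

theorem exists_unit_smul_eq {k : ℕ} (hk : k < n) (v : Fin k → Fin n → ℝ) {x : Fin n → ℝ}
    (hx : ∀ i, x ⬝ᵥ v i = 0) :
    ∃ e : Fin n → ℝ, e ⬝ᵥ e = 1 ∧ (∀ i, e ⬝ᵥ v i = 0) ∧ x = √(x ⬝ᵥ x) • e := by
  by_cases hx0 : x = 0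
  · obtain ⟨y, hy0, hy⟩ := exists_ne_zero_orthogonal hk v
    exact ⟨_, dotProduct_inv_sqrt_smul_self hy0,
      fun i => by rw [smul_dotProduct, hy i, smul_zero], by simp [hx0]⟩
  · refine ⟨_, dotProduct_inv_sqrt_smul_self hx0,
      fun i => by rw [smul_dotProduct, hx i, smul_zero], ?_⟩
    rw [smul_smul, mul_inv_cancel₀ (Real.sqrt_pos.2 (dotProduct_self_pos hx0)).ne', one_smul]

theorem exists_ON4_smul_eq (hn : 4 ≤ n) {a b c d : Fin n → ℝ} (hab : a ⬝ᵥ b = 0)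
    (hac : a ⬝ᵥ c = 0) (had : a ⬝ᵥ d = 0) (hbc : b ⬝ᵥ c = 0) (hbd : b ⬝ᵥ d = 0)
    (hcd : c ⬝ᵥ d = 0) :
    ∃ e₁ e₂ e₃ e₄, ON4 e₁ e₂ e₃ e₄ ∧ a = √(a ⬝ᵥ a) • e₁ ∧ b = √(b ⬝ᵥ b) • e₂ ∧
      c = √(c ⬝ᵥ c) • e₃ ∧ d = √(d ⬝ᵥ d) • e₄ := by
  have h3 : 3 < n := by omega
  obtain ⟨e₁, h₁, h₁', ha⟩ := exists_unit_smul_eq h3 ![b, c, d] (x := a) (by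
    intro i; fin_cases i; exacts [hab, hac, had])
  obtain ⟨e₂, h₂, h₂', hb⟩ := exists_unit_smul_eq h3 ![e₁, c, d] (x := b) (by
    intro i; fin_cases i; exacts [(dotProduct_comm _ _).trans (h₁' 0), hbc, hbd])
  obtain ⟨e₃, h₃, h₃', hc⟩ := exists_unit_smul_eq h3 ![e₁, e₂, d] (x := c) (by
    intro i; fin_cases i
    exacts [(dotProduct_comm _ _).trans (h₁' 1), (dotProduct_comm _ _).trans (h₂' 1), hcd])
  obtain ⟨e₄, h₄, h₄', hd⟩ := exists_unit_smul_eq h3 ![e₁, e₂, e₃] (x := d) (by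
    intro i; fin_cases i
    exacts [(dotProduct_comm _ _).trans (h₁' 2), (dotProduct_comm _ _).trans (h₂' 2),
      (dotProduct_comm _ _).trans (h₃' 2)])
  exact ⟨e₁, e₂, e₃, e₄, ⟨h₁, h₂, h₃, h₄, (dotProduct_comm _ _).trans (h₂' 0),
    (dotProduct_comm _ _).trans (h₃' 0), (dotProduct_comm _ _).trans (h₄' 0),
    (dotProduct_comm _ _).trans (h₃' 1), (dotProduct_comm _ _).trans (h₄' 1),
    (dotProduct_comm _ _).trans (h₄' 2)⟩, ha, hb, hc, hd⟩

end RealFrames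

section ComplexVectors

variable {n : ℕ}

open Complex

theorem conjv_eq_star (ζ : Fin n → ℂ) : conjv ζ = star ζ := rfl

theorem ιC_re_add_I_smul_ιC_im (ζ : Fin n → ℂ) :
    ιC (fun i => (ζ i).re) + I • ιC (fun i => (ζ i).im) = ζ := by
  ext i
  simp [ιC, mul_comm I, re_add_im]

theorem conjv_ιC_add_I_smul (a b : Fin n → ℝ) : conjv (ιC a + I • ιC b) = ιC a - I • ιC b := by
  ext i
  simp [conjv, ιC, sub_eq_add_neg]

theorem re_gc_ιC_add_I_smul (a b c d : Fin n → ℝ) :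
    (gc (ιC a + I • ιC b) (ιC c + I • ιC d)).re = a ⬝ᵥ c - b ⬝ᵥ d := by
  simp [gc, ιC, dotProduct, re_sum, Finset.sum_sub_distrib]

theorem im_gc_ιC_add_I_smul (a b c d : Fin n → ℝ) :
    (gc (ιC a + I • ιC b) (ιC c + I • ιC d)).im = a ⬝ᵥ d + b ⬝ᵥ c := by
  simp [gc, ιC, dotProduct, im_sum, Finset.sum_add_distrib]

theorem re_ιC_add_I_smul_dotProduct_star (a b c d : Fin n → ℝ) :
    ((ιC a + I • ιC b) ⬝ᵥ star (ιC c + I • ιC d)).re = a ⬝ᵥ c + b ⬝ᵥ d := by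
  simp [ιC, dotProduct, re_sum, Finset.sum_add_distrib]

theorem im_ιC_add_I_smul_dotProduct_star (a b c d : Fin n → ℝ) :
    ((ιC a + I • ιC b) ⬝ᵥ star (ιC c + I • ιC d)).im = b ⬝ᵥ c - a ⬝ᵥ d := by
  simp [ιC, dotProduct, im_sum, ← Finset.sum_sub_distrib, neg_add_eq_sub]

theorem gc_eq_dotProduct (ζ η : Fin n → ℂ) : gc ζ η = ζ ⬝ᵥ η := rfl

theorem gc_comm (ζ η : Fin n → ℂ) : gc ζ η = gc η ζ := dotProduct_comm ζ η

theorem gc_lincomb (a b c d : ℂ) (x y : Fin n → ℂ) :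
    gc (a • x + b • y) (c • x + d • y) =
      a * c * gc x x + a * d * gc x y + b * c * gc y x + b * d * gc y y := by
  simp only [gc_eq_dotProduct, add_dotProduct, dotProduct_add, smul_dotProduct, dotProduct_smul,
    smul_eq_mul]
  ring

theorem lincomb_dotProduct_star_lincomb {x y : Fin n → ℂ} (hx : x ⬝ᵥ star x = 1)
    (hy : y ⬝ᵥ star y = 1) (hxy : x ⬝ᵥ star y = 0) (a b c d : ℂ) :
    (a • x + b • y) ⬝ᵥ star (c • x + d • y) = a * star c + b * star d := by
  have hyx : y ⬝ᵥ star x = 0 := by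
    rw [dotProduct_comm, star_dotProduct, dotProduct_comm, hxy, star_zero]
  simp only [star_add, star_smul, add_dotProduct, dotProduct_add, smul_dotProduct, dotProduct_smul,
    smul_eq_mul, hx, hy, hxy, hyx]
  ring

theorem exists_orthonormal_pair_of_linearIndependent {ζ η : Fin n → ℂ}
    (h : LinearIndependent ℂ ![ζ, η]) :
    ∃ w₁ w₂ : Fin n → ℂ, w₁ ⬝ᵥ star w₁ = 1 ∧ w₂ ⬝ᵥ star w₂ = 1 ∧ w₁ ⬝ᵥ star w₂ = 0 ∧
      ∃ a b c d : ℂ, ζ = a • w₁ + b • w₂ ∧ η = c • w₁ + d • w₂ := by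
  let f : Fin 2 → EuclideanSpace ℂ (Fin n) := fun i => WithLp.toLp 2 (![ζ, η] i)
  have hf : LinearIndependent ℂ f :=
    h.map' (WithLp.linearEquiv 2 ℂ (Fin n → ℂ)).symm.toLinearMap (LinearEquiv.ker _)
  set w := InnerProductSpace.gramSchmidtNormed ℂ f
  have hw := orthonormal_iff_ite.1 (InnerProductSpace.gramSchmidtNormed_orthonormal hf)
  have hspan : ∀ i, f i ∈ Submodule.span ℂ (Set.range w) := by
    rw [InnerProductSpace.span_gramSchmidtNormed_range, InnerProductSpace.span_gramSchmidt]
    exact fun i => Submodule.subset_span ⟨i, rfl⟩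
  obtain ⟨c₀, hc₀⟩ := Submodule.mem_span_range_iff_exists_fun ℂ |>.1 (hspan 0)
  obtain ⟨c₁, hc₁⟩ := Submodule.mem_span_range_iff_exists_fun ℂ |>.1 (hspan 1)
  refine ⟨w 0, w 1, hw 0 0, hw 1 1, hw 1 0, c₀ 0, c₀ 1, c₁ 0, c₁ 1, ?_, ?_⟩
  · simpa [Fin.sum_univ_two, f] using congrArg WithLp.ofLp hc₀.symm
  · simpa [Fin.sum_univ_two, f] using congrArg WithLp.ofLp hc₁.symm

theorem MultilinearMap.map_lincomb_conjv (f : MultilinearMap ℂ (fun _ : Fin 4 => Fin n → ℂ) ℂ)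
    (hl : ∀ x z w, f ![x, x, z, w] = 0) (hr : ∀ x y z, f ![x, y, z, z] = 0)
    (a b c d : ℂ) (x y : Fin n → ℂ) :
    f ![a • x + b • y, c • x + d • y, conjv (a • x + b • y), conjv (c • x + d • y)] =
      Complex.normSq (a * d - b * c) * f ![x, y, conjv x, conjv y] := by
  simp only [conjv_eq_star, star_add, star_smul]
  rw [f.map_lincomb_left hl, f.map_lincomb_right hr, smul_smul, smul_eq_mul,
    ← Complex.mul_conj, map_sub, map_mul, map_mul]
  rfl

end ComplexVectors

/- If `B̄B e = σ² e`, then `F = conj (B e) + σ e` satisfies `B F = σ F̄`; when `F = 0`,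
`i e` works instead. -/
theorem Matrix.exists_coneigenvector {ι : Type*} [Fintype ι] [DecidableEq ι] [Nonempty ι]
    {B : Matrix ι ι ℂ} (hB : Bᵀ = B) :
    ∃ u : ι → ℂ, u ≠ 0 ∧ ∃ σ : ℝ, 0 ≤ σ ∧ B *ᵥ u = (σ : ℂ) • star u := by
  have hA := posSemidef_conjTranspose_mul_self B
  set i := Classical.arbitrary ι
  set e : ι → ℂ := ⇑(hA.1.eigenvectorBasis i)
  set t := hA.1.eigenvalues i
  have he : e ≠ 0 := by
    simpa [e] using hA.1.eigenvectorBasis.orthonormal.ne_zero i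
  have het : (Bᴴ * B) *ᵥ e = (t : ℂ) • e := by
    rw [hA.1.mulVec_eigenvectorBasis i, ← Complex.coe_smul]
  have hstar : ∀ v, star (B *ᵥ v) = Bᴴ *ᵥ star v := by
    intro v
    rw [star_mulVec, ← mulVec_transpose, conjTranspose, hB, ← transpose_map, hB]
  have hσ : ((√t : ℝ) : ℂ) * √t = t := by
    rw [← Complex.ofReal_mul, Real.mul_self_sqrt (hA.eigenvalues_nonneg i)]
  have hBBe : B *ᵥ star (B *ᵥ e) = (t : ℂ) • star e := by
    have h : star (B *ᵥ star (B *ᵥ e)) = (t : ℂ) • e := by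
      rw [hstar, star_star, mulVec_mulVec, het]
    rw [← star_star (B *ᵥ _), h, star_smul, Complex.star_def, Complex.conj_ofReal]
  by_cases hF : star (B *ᵥ e) + (√t : ℂ) • e = 0
  · have hBe : B *ᵥ e = -(√t : ℂ) • star e := by
      rw [← star_star (B *ᵥ e), eq_neg_of_add_eq_zero_left hF, star_neg, star_smul,
        Complex.star_def, Complex.conj_ofReal, neg_smul]
    refine ⟨Complex.I • e, smul_ne_zero Complex.I_ne_zero he, √t, Real.sqrt_nonneg _, ?_⟩
    rw [mulVec_smul, hBe, star_smul, Complex.star_def, Complex.conj_I]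
    module
  · refine ⟨_, hF, √t, Real.sqrt_nonneg _, ?_⟩
    rw [mulVec_add, mulVec_smul, hBBe, star_add, star_smul, star_star, Complex.star_def,
      Complex.conj_ofReal, smul_add, smul_smul, hσ]
    abel

theorem Complex.exists_ne_zero_sq_mul_eq_norm (s : ℂ) : ∃ c : ℂ, c ≠ 0 ∧ c ^ 2 * s = ‖s‖ := by
  refine ⟨exp (-(s.arg / 2) * I), exp_ne_zero _, ?_⟩
  calc _ = exp (-(s.arg / 2) * I) ^ 2 * (‖s‖ * exp (s.arg * I)) := by
        rw [norm_mul_exp_arg_mul_I]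
    _ = ‖s‖ * exp (-(s.arg / 2) * I + -(s.arg / 2) * I + s.arg * I) := by
        rw [sq, exp_add, exp_add]; ring
    _ = ‖s‖ := by ring_nf; rw [exp_zero, mul_one]

section Takagi

variable {n : ℕ}

/-- A Takagi basis of its span; recall that `0 ≤ z` in `ComplexOrder` means `z` is real and
nonnegative. -/
def IsTakagiPair (V₁ V₂ : Fin n → ℂ) : Prop :=
  0 ≤ gc V₁ V₁ ∧ 0 ≤ gc V₂ V₂ ∧ gc V₁ V₂ = 0 ∧ V₁ ⬝ᵥ star V₂ = 0

/- `V₁` has the coordinates of a con-eigenvector `u` of the Gram matrix of `gc`; `V₂` is its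
hermitian complement in the plane, rotated by a phase. -/
theorem exists_isTakagiPair_lincomb {w₁ w₂ : Fin n → ℂ} (h₁ : w₁ ⬝ᵥ star w₁ = 1)
    (h₂ : w₂ ⬝ᵥ star w₂ = 1) (h₁₂ : w₁ ⬝ᵥ star w₂ = 0) :
    ∃ a b c d : ℂ, a * d - b * c ≠ 0 ∧ IsTakagiPair (a • w₁ + b • w₂) (c • w₁ + d • w₂) := by
  set B : Matrix (Fin 2) (Fin 2) ℂ := !![gc w₁ w₁, gc w₁ w₂; gc w₂ w₁, gc w₂ w₂]
  have hB : Bᵀ = B := by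
    ext i j
    fin_cases i <;> fin_cases j <;> simp [B, gc_comm w₁ w₂]
  obtain ⟨u, hu, σ, hσ, hBu⟩ := B.exists_coneigenvector hB
  have hu₀ : gc w₁ w₁ * u 0 + gc w₁ w₂ * u 1 = σ * star (u 0) := by
    simpa [B, mulVec, dotProduct, Fin.sum_univ_two] using congrFun hBu 0
  have hu₁ : gc w₁ w₂ * u 0 + gc w₂ w₂ * u 1 = σ * star (u 1) := by
    simpa [B, mulVec, dotProduct, Fin.sum_univ_two, gc_comm w₂ w₁] using congrFun hBu 1
  have hnorm : u 0 * star (u 0) + u 1 * star (u 1) = u ⬝ᵥ star u := by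
    simp [dotProduct, Fin.sum_univ_two]
  set v : Fin n → ℂ := -star (u 1) • w₁ + star (u 0) • w₂
  obtain ⟨c, hc, hcs⟩ := Complex.exists_ne_zero_sq_mul_eq_norm (gc v v)
  refine ⟨u 0, u 1, c * -star (u 1), c * star (u 0), ?_, ?_, ?_, ?_, ?_⟩
  · have : u 0 * (c * star (u 0)) - u 1 * (c * -star (u 1)) = c * (u ⬝ᵥ star u) := by
      rw [← hnorm]; ring
    rw [this]
    exact mul_ne_zero hc (dotProduct_self_star_eq_zero.not.2 hu)
  · have : gc (u 0 • w₁ + u 1 • w₂) (u 0 • w₁ + u 1 • w₂) = σ * (u ⬝ᵥ star u) := by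
      rw [gc_lincomb, gc_comm w₂ w₁, ← hnorm]
      linear_combination u 0 * hu₀ + u 1 * hu₁
    rw [this, dotProduct_comm]
    exact mul_nonneg (Complex.zero_le_real.2 hσ) (dotProduct_star_self_nonneg u)
  · have : gc ((c * -star (u 1)) • w₁ + (c * star (u 0)) • w₂)
        ((c * -star (u 1)) • w₁ + (c * star (u 0)) • w₂) = c ^ 2 * gc v v := by
      rw [gc_lincomb, gc_lincomb]; ring
    rw [this, hcs]
    exact Complex.zero_le_real.2 (norm_nonneg _)
  · rw [gc_lincomb, gc_comm w₂ w₁]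
    linear_combination c * (-star (u 1) * hu₀ + star (u 0) * hu₁)
  · rw [lincomb_dotProduct_star_lincomb h₁ h₂ h₁₂]
    simp only [star_mul, star_neg, star_star]
    ring

end Takagi

section Curvature

variable {n : ℕ} {R : MultilinearMap ℝ (fun _ : Fin 4 => (Fin n → ℝ)) ℝ}
  {Rc : MultilinearMap ℂ (fun _ : Fin 4 => (Fin n → ℂ)) ℂ}

theorem ιC_single (i : Fin n) : ιC (Pi.single i 1) = Pi.single i (1 : ℂ) := by
  ext j
  simp [ιC, Pi.single_apply, apply_ite]

theorem MultilinearMap.ext_ιC {N : Type*} [AddCommGroup N] [Module ℂ N]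
    {f g : MultilinearMap ℂ (fun _ : Fin 4 => Fin n → ℂ) N}
    (h : ∀ X Y Z W, f ![ιC X, ιC Y, ιC Z, ιC W] = g ![ιC X, ιC Y, ιC Z, ιC W]) : f = g := by
  refine Module.Basis.ext_multilinear (fun _ => Pi.basisFun ℂ (Fin n)) fun v => ?_
  have hv : (fun i => Pi.basisFun ℂ (Fin n) (v i)) = ![ιC (Pi.single (v 0) 1),
      ιC (Pi.single (v 1) 1), ιC (Pi.single (v 2) 1), ιC (Pi.single (v 3) 1)] := by
    ext i : 1
    fin_cases i <;> simp [ιC_single]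
  rw [hv, h]

theorem extension_swap_left (hanti : ∀ X Y Z W, R ![X, Y, Z, W] = - R ![Y, X, Z, W])
    (hext : ∀ X Y Z W, Rc ![ιC X, ιC Y, ιC Z, ιC W] = (R ![X, Y, Z, W] : ℂ))
    (x y z w : Fin n → ℂ) : Rc ![x, y, z, w] = -Rc ![y, x, z, w] := by
  have key : Rc = -Rc.domDomCongr (Equiv.swap 0 1) := MultilinearMap.ext_ιC fun X Y Z W => by
    rw [_root_.neg_apply, MultilinearMap.domDomCongr_apply, vec4_comp_swap_zero_one, hext, hext,
      hanti, Complex.ofReal_neg]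
  conv_lhs => rw [key, _root_.neg_apply, MultilinearMap.domDomCongr_apply, vec4_comp_swap_zero_one]

theorem extension_swap_right (hanti : ∀ X Y Z W, R ![X, Y, Z, W] = - R ![Y, X, Z, W])
    (hpair : ∀ X Y Z W, R ![X, Y, Z, W] = R ![Z, W, X, Y])
    (hext : ∀ X Y Z W, Rc ![ιC X, ιC Y, ιC Z, ιC W] = (R ![X, Y, Z, W] : ℂ))
    (x y z w : Fin n → ℂ) : Rc ![x, y, z, w] = -Rc ![x, y, w, z] := by
  have key : Rc = -Rc.domDomCongr (Equiv.swap 2 3) := MultilinearMap.ext_ιC fun X Y Z W => by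
    rw [_root_.neg_apply, MultilinearMap.domDomCongr_apply, vec4_comp_swap_two_three, hext, hext,
      hpair, hanti, hpair, Complex.ofReal_neg]
  conv_lhs => rw [key, _root_.neg_apply, MultilinearMap.domDomCongr_apply, vec4_comp_swap_two_three]

theorem extension_alternating_left (hanti : ∀ X Y Z W, R ![X, Y, Z, W] = - R ![Y, X, Z, W])
    (hext : ∀ X Y Z W, Rc ![ιC X, ιC Y, ιC Z, ιC W] = (R ![X, Y, Z, W] : ℂ))
    (x z w : Fin n → ℂ) : Rc ![x, x, z, w] = 0 :=
  self_eq_neg.1 (extension_swap_left hanti hext x x z w)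

theorem extension_alternating_right (hanti : ∀ X Y Z W, R ![X, Y, Z, W] = - R ![Y, X, Z, W])
    (hpair : ∀ X Y Z W, R ![X, Y, Z, W] = R ![Z, W, X, Y])
    (hext : ∀ X Y Z W, Rc ![ιC X, ιC Y, ιC Z, ιC W] = (R ![X, Y, Z, W] : ℂ))
    (x y z : Fin n → ℂ) : Rc ![x, y, z, z] = 0 :=
  self_eq_neg.1 (extension_swap_right hanti hpair hext x y z z)

/-- `R(ζ, η, ζ̄, η̄)` for `ζ = a + ib`, `η = c + id` (`extension_apply_re_im`). -/
def complexSectionalCurvature (R : MultilinearMap ℝ (fun _ : Fin 4 => (Fin n → ℝ)) ℝ)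
    (a b c d : Fin n → ℝ) : ℝ :=
  R ![a, c, a, c] + R ![a, d, a, d] + R ![b, c, b, c] + R ![b, d, b, d] - 2 * R ![a, b, c, d]

theorem extension_apply_re_im (hanti : ∀ X Y Z W, R ![X, Y, Z, W] = - R ![Y, X, Z, W])
    (hpair : ∀ X Y Z W, R ![X, Y, Z, W] = R ![Z, W, X, Y])
    (hbianchi : ∀ X Y Z W, R ![X, Y, Z, W] + R ![Y, Z, X, W] + R ![Z, X, Y, W] = 0)
    (hext : ∀ X Y Z W, Rc ![ιC X, ιC Y, ιC Z, ιC W] = (R ![X, Y, Z, W] : ℂ))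
    (a b c d : Fin n → ℝ) :
    Rc ![ιC a + Complex.I • ιC b, ιC c + Complex.I • ιC d, ιC a - Complex.I • ιC b,
      ιC c - Complex.I • ιC d] = complexSectionalCurvature R a b c d := by
  simp only [MultilinearMap.apply_vec4_eq_curryLeft, map_add, map_sub, map_smul,
    LinearMap.add_apply, LinearMap.sub_apply, LinearMap.smul_apply, _root_.add_apply,
    _root_.sub_apply, _root_.smul_apply]
  simp only [← MultilinearMap.apply_vec4_eq_curryLeft, hext, smul_eq_mul]
  apply Complex.ext <;>
    simp only [complexSectionalCurvature, Complex.ofReal_re, Complex.ofReal_im, Complex.I_re,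
      Complex.I_im, Complex.add_re, Complex.add_im, Complex.sub_re, Complex.sub_im, Complex.mul_re,
      Complex.mul_im]
  · linarith [hpair a d b c, hpair a c b d, hbianchi a b c d, hanti c a b d]
  · linarith [hpair a c a d, hpair a c b c, hpair a d b d, hpair b c b d, hpair a c b d,
      hpair a d b c]

theorem complexSectionalCurvature_smul (a b c d : Fin n → ℝ) (α β γ δ : ℝ) :
    complexSectionalCurvature R (α • a) (β • b) (γ • c) (δ • d) =
      α ^ 2 * γ ^ 2 * R ![a, c, a, c] + α ^ 2 * δ ^ 2 * R ![a, d, a, d]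
        + β ^ 2 * γ ^ 2 * R ![b, c, b, c] + β ^ 2 * δ ^ 2 * R ![b, d, b, d]
        - 2 * α * β * γ * δ * R ![a, b, c, d] := by
  simp only [complexSectionalCurvature, MultilinearMap.apply_vec4_eq_curryLeft, map_smul,
    LinearMap.smul_apply, _root_.smul_apply, smul_eq_mul]
  ring

/-- Condition (i): `M × ℝ²` has nonnegative isotropic curvature. -/
def IsPIC2 (R : MultilinearMap ℝ (fun _ : Fin 4 => (Fin n → ℝ)) ℝ) : Prop :=
  ∀ e₁ e₂ e₃ e₄ : Fin n → ℝ, ON4 e₁ e₂ e₃ e₄ →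
    ∀ lam mu : ℝ, lam ∈ Set.Icc (0 : ℝ) 1 → mu ∈ Set.Icc (0 : ℝ) 1 →
    0 ≤ R ![e₁, e₃, e₁, e₃] + lam ^ 2 * R ![e₁, e₄, e₁, e₄]
        + mu ^ 2 * R ![e₂, e₃, e₂, e₃] + lam ^ 2 * mu ^ 2 * R ![e₂, e₄, e₂, e₄]
        - 2 * lam * mu * R ![e₁, e₂, e₃, e₄]

theorem IsPIC2.complexSectionalCurvature_nonneg (hR : IsPIC2 R) (hn : 4 ≤ n)
    {a b c d : Fin n → ℝ} (hab : a ⬝ᵥ b = 0) (hac : a ⬝ᵥ c = 0) (had : a ⬝ᵥ d = 0)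
    (hbc : b ⬝ᵥ c = 0) (hbd : b ⬝ᵥ d = 0) (hcd : c ⬝ᵥ d = 0)
    (hba : b ⬝ᵥ b ≤ a ⬝ᵥ a) (hdc : d ⬝ᵥ d ≤ c ⬝ᵥ c) :
    0 ≤ complexSectionalCurvature R a b c d := by
  obtain ⟨e₁, e₂, e₃, e₄, he, ha, hb, hc, hd⟩ := exists_ON4_smul_eq hn hab hac had hbc hbd hcd
  rw [ha, hb, hc, hd, complexSectionalCurvature_smul]
  exact nonneg_of_nonneg_on_unit_square (hR e₁ e₂ e₃ e₄ he) (Real.sqrt_nonneg _)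
    (Real.sqrt_le_sqrt hba) (Real.sqrt_nonneg _) (Real.sqrt_le_sqrt hdc)

theorem IsPIC2.extension_nonneg_of_isTakagiPair (hR : IsPIC2 R) (hn : 4 ≤ n)
    (hanti : ∀ X Y Z W, R ![X, Y, Z, W] = - R ![Y, X, Z, W])
    (hpair : ∀ X Y Z W, R ![X, Y, Z, W] = R ![Z, W, X, Y])
    (hbianchi : ∀ X Y Z W, R ![X, Y, Z, W] + R ![Y, Z, X, W] + R ![Z, X, Y, W] = 0)
    (hext : ∀ X Y Z W, Rc ![ιC X, ιC Y, ιC Z, ιC W] = (R ![X, Y, Z, W] : ℂ))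
    {V₁ V₂ : Fin n → ℂ} (hV : IsTakagiPair V₁ V₂) :
    0 ≤ Rc ![V₁, V₂, conjv V₁, conjv V₂] := by
  obtain ⟨a, b, rfl⟩ : ∃ a b, ιC a + Complex.I • ιC b = V₁ := ⟨_, _, ιC_re_add_I_smul_ιC_im V₁⟩
  obtain ⟨c, d, rfl⟩ : ∃ c d, ιC c + Complex.I • ιC d = V₂ := ⟨_, _, ιC_re_add_I_smul_ιC_im V₂⟩
  obtain ⟨h₁, h₂, h₁₂, hh⟩ := hV
  rw [Complex.nonneg_iff, re_gc_ιC_add_I_smul, im_gc_ιC_add_I_smul] at h₁ h₂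
  rw [Complex.ext_iff, re_gc_ιC_add_I_smul, im_gc_ιC_add_I_smul, Complex.zero_re,
    Complex.zero_im] at h₁₂
  rw [Complex.ext_iff, re_ιC_add_I_smul_dotProduct_star, im_ιC_add_I_smul_dotProduct_star,
    Complex.zero_re, Complex.zero_im] at hh
  rw [conjv_ιC_add_I_smul, conjv_ιC_add_I_smul, extension_apply_re_im hanti hpair hbianchi hext,
    Complex.zero_le_real]
  have hba := dotProduct_comm b a
  have hdc := dotProduct_comm d c
  exact hR.complexSectionalCurvature_nonneg hn (by linarith) (by linarith) (by linarith)
    (by linarith) (by linarith) (by linarith) (by linarith) (by linarith)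

theorem IsPIC2.extension_nonneg_of_orthonormal (hR : IsPIC2 R) (hn : 4 ≤ n)
    (hanti : ∀ X Y Z W, R ![X, Y, Z, W] = - R ![Y, X, Z, W])
    (hpair : ∀ X Y Z W, R ![X, Y, Z, W] = R ![Z, W, X, Y])
    (hbianchi : ∀ X Y Z W, R ![X, Y, Z, W] + R ![Y, Z, X, W] + R ![Z, X, Y, W] = 0)
    (hext : ∀ X Y Z W, Rc ![ιC X, ιC Y, ιC Z, ιC W] = (R ![X, Y, Z, W] : ℂ))
    {w₁ w₂ : Fin n → ℂ} (h₁ : w₁ ⬝ᵥ star w₁ = 1) (h₂ : w₂ ⬝ᵥ star w₂ = 1)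
    (h₁₂ : w₁ ⬝ᵥ star w₂ = 0) :
    0 ≤ Rc ![w₁, w₂, conjv w₁, conjv w₂] := by
  obtain ⟨a, b, c, d, hdet, hV⟩ := exists_isTakagiPair_lincomb h₁ h₂ h₁₂
  have hVnonneg := hR.extension_nonneg_of_isTakagiPair hn hanti hpair hbianchi hext hV
  rw [Rc.map_lincomb_conjv (extension_alternating_left hanti hext)
    (extension_alternating_right hanti hpair hext)] at hVnonneg
  have hpos : 0 < Complex.normSq (a * d - b * c) := Complex.normSq_pos.2 hdet
  have := mul_nonneg (Complex.zero_le_real.2 (inv_nonneg.2 hpos.le)) hVnonneg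
  rwa [Complex.ofReal_inv, inv_mul_cancel_left₀ (Complex.ofReal_ne_zero.2 hpos.ne')] at this

end Curvature
theorem pic2_iff_complex_sectional_nonneg {n : ℕ} (hn : 4 ≤ n)
    (R : MultilinearMap ℝ (fun _ : Fin 4 => (Fin n → ℝ)) ℝ)
    (hanti : ∀ X Y Z W, R ![X, Y, Z, W] = - R ![Y, X, Z, W])
    (hpair : ∀ X Y Z W, R ![X, Y, Z, W] = R ![Z, W, X, Y])
    (hbianchi : ∀ X Y Z W,
      R ![X, Y, Z, W] + R ![Y, Z, X, W] + R ![Z, X, Y, W] = 0)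
    (Rc : MultilinearMap ℂ (fun _ : Fin 4 => (Fin n → ℂ)) ℂ)
    (hext : ∀ X Y Z W : Fin n → ℝ,
      Rc ![ιC X, ιC Y, ιC Z, ιC W] = (R ![X, Y, Z, W] : ℂ)) :
    (∀ e₁ e₂ e₃ e₄ : Fin n → ℝ, ON4 e₁ e₂ e₃ e₄ →
      ∀ lam mu : ℝ, lam ∈ Set.Icc (0 : ℝ) 1 → mu ∈ Set.Icc (0 : ℝ) 1 →
      0 ≤ R ![e₁, e₃, e₁, e₃] + lam ^ 2 * R ![e₁, e₄, e₁, e₄]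
          + mu ^ 2 * R ![e₂, e₃, e₂, e₃] + lam ^ 2 * mu ^ 2 * R ![e₂, e₄, e₂, e₄]
          - 2 * lam * mu * R ![e₁, e₂, e₃, e₄]) ↔
    (∀ ζ η : Fin n → ℂ, 0 ≤ Rc ![ζ, η, conjv ζ, conjv η]) := by
  show IsPIC2 R ↔ _
  have hl := extension_alternating_left hanti hext
  have hr := extension_alternating_right hanti hpair hext
  constructor
  · intro hR ζ η
    by_cases hind : LinearIndependent ℂ ![ζ, η]
    · obtain ⟨w₁, w₂, h₁, h₂, h₁₂, a, b, c, d, rfl, rfl⟩ :=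
        exists_orthonormal_pair_of_linearIndependent hind
      rw [Rc.map_lincomb_conjv hl hr]
      exact mul_nonneg (Complex.zero_le_real.2 (Complex.normSq_nonneg _))
        (IsPIC2.extension_nonneg_of_orthonormal hR hn hanti hpair hbianchi hext h₁ h₂ h₁₂)
    · rw [Rc.map_eq_zero_of_not_linearIndependent hl hind]
  · intro h e₁ e₂ e₃ e₄ _ lam mu _ _
    have key := h (ιC e₁ + Complex.I • ιC (mu • e₂)) (ιC e₃ + Complex.I • ιC (lam • e₄))
    rw [conjv_ιC_add_I_smul, conjv_ιC_add_I_smul, extension_apply_re_im hanti hpair hbianchi hext,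
      Complex.zero_le_real, ← one_smul ℝ e₁, ← one_smul ℝ e₃, complexSectionalCurvature_smul]
      at key
    linarith
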